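/- The generating function S(x,y) of r-canonical secondary structures with minimum arc-length λ satisfies S(x,y) = (A(x,y)/B(x,y)) · C((x²y)^r · A(x,y)/B(x,y)²), where C(z) = (1−√(1−4z))/(2z) is the Catalan generating function, A(x,y) = 1 − x²y + (x²y)^r, and B(x,y) = (1−x)A(x,y) + (x²y)^r Σ_{i=0}^{λ−2} x^i. -/

import Mathlib

open PowerSeries

/-- `M` is an `r`-canonical RNA secondary structure on vertices `1,…,n` with minimum
arc-length `lam`. -/
def IsCanSecStr (n lam r : ℕ) (M : Finset (ℕ × ℕ)) : Prop :=
  (∀ p ∈ M, 1 ≤ p.1 ∧ p.1 + lam ≤ p.2 ∧ p.2 ≤ n) ∧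
  (∀ p ∈ M, ∀ q ∈ M, p ≠ q → p.1 ≠ q.1 ∧ p.1 ≠ q.2 ∧ p.2 ≠ q.1 ∧ p.2 ≠ q.2) ∧
  (∀ p ∈ M, ∀ q ∈ M, ¬ (p.1 < q.1 ∧ q.1 < p.2 ∧ p.2 < q.2)) ∧
  (∀ p ∈ M, (p.1 - 1, p.2 + 1) ∉ M → ∀ t < r, (p.1 + t, p.2 - t) ∈ M)

noncomputable def sCount (lam r n l : ℕ) : ℕ :=
  Nat.card {M : Finset (ℕ × ℕ) // IsCanSecStr n lam r M ∧ M.card = l}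

/-- The bivariate generating function `S(x,y)`. -/
noncomputable def Sgf (lam r : ℕ) : PowerSeries (Polynomial ℚ) :=
  PowerSeries.mk fun n =>
    ∑ l ∈ Finset.range (n + 1), Polynomial.C ((sCount lam r n l : ℚ)) * Polynomial.X ^ l

/-- The monomial `x²y`. -/
noncomputable def xxy : PowerSeries (Polynomial ℚ) :=
  PowerSeries.X ^ 2 * PowerSeries.C Polynomial.X

/-- `A(x,y) = 1 - x²y + (x²y)^r`. -/
noncomputable def Agf (r : ℕ) : PowerSeries (Polynomial ℚ) := 1 - xxy + xxy ^ r

/-- `B(x,y) = (1-x)·A(x,y) + (x²y)^r · Σ_{i=0}^{λ-2} x^i`. -/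
noncomputable def Bgf (lam r : ℕ) : PowerSeries (Polynomial ℚ) :=
  (1 - PowerSeries.X) * Agf r + xxy ^ r * ∑ i ∈ Finset.range (lam - 1), PowerSeries.X ^ i

/-- The argument `z₀ = (x²y)^r · A(x,y)/B(x,y)²` of the Catalan generating function. -/
noncomputable def z0 (lam r : ℕ) : PowerSeries (Polynomial ℚ) :=
  xxy ^ r * Agf r * (Ring.inverse (Bgf lam r)) ^ 2

/-- `C(z₀) = Σ_{m≥0} Cat(m)·z₀^m`, the Catalan generating function evaluated at `z₀`; since
`z₀` has zero constant term, the coefficient of `x^n` only involves `m ≤ n`. -/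
noncomputable def CatAt (lam r : ℕ) : PowerSeries (Polynomial ℚ) :=
  PowerSeries.mk fun n =>
    ∑ m ∈ Finset.range (n + 1),
      (catalan m : Polynomial ℚ) * PowerSeries.coeff n ((z0 lam r) ^ m)

/-!
Two decompositions give the functional equation. By the partner of the last vertex,
`S = 1 + x S + S W`, where `W` counts the closed structures, those containing the arc `(1, n)`.
In a closed structure either the stack on `(1, n)` is longer than `r`, and removing `(1, n)` leaves
a closed structure on `n - 2` vertices, or it has exactly `r` arcs and encloses an arbitrary
structure on `n - 2r` vertices without its own outer arc; hence
`W (1 - x²y + (x²y)^r) = (x²y)^r (S - Σ_{i < λ-1} x^i)`. Eliminating `W` gives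
`B S = A + (x²y)^r S²`. Since `(x²y)^r` has no constant term this quadratic has a unique power
series solution, and `C(z) = 1 + z C(z)²` shows that `(A / B) C((x²y)^r A / B²)` is one.
-/

open Finset

namespace PowerSeries

variable {R : Type*} [CommRing R]

theorem coeff_pow_eq_zero_of_lt {b : R⟦X⟧} (hb : constantCoeff b = 0) {n d : ℕ} (h : n < d) :
    coeff n (b ^ d) = 0 := by
  obtain ⟨c, rfl⟩ := X_dvd_iff.2 hb
  rw [mul_pow, coeff_X_pow_mul', if_neg (by omega)]

theorem coeff_subst_eq_sum_range {b : R⟦X⟧} (hb : constantCoeff b = 0) (f : R⟦X⟧) (n : ℕ) :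
    coeff n (f.subst b) = ∑ d ∈ range (n + 1), coeff d f * coeff n (b ^ d) := by
  rw [coeff_subst' (HasSubst.of_constantCoeff_zero' hb)]
  refine finsum_eq_sum_of_support_subset _ fun d hd => ?_
  by_contra hdn
  simp only [coe_range, Set.mem_Iio, not_lt] at hdn
  exact hd (by simp only [smul_eq_mul]; rw [coeff_pow_eq_zero_of_lt hb (by omega), mul_zero])

theorem coeff_sum_range_X_pow (k m : ℕ) :
    coeff m (∑ i ∈ range k, (X : R⟦X⟧) ^ i) = if m < k then 1 else 0 := by
  simp [map_sum, coeff_X_pow]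

theorem eq_zero_of_eq_X_mul {d e : R⟦X⟧} (h : d = X * e * d) : d = 0 := by
  ext n
  induction n using Nat.strong_induction_on with
  | _ n ih =>
    rw [h, mul_assoc, map_zero]
    rcases n with _ | n
    · simp
    · rw [coeff_succ_X_mul, coeff_mul]
      exact sum_eq_zero fun p hp => by
        rw [ih p.2 (by have := mem_antidiagonal.1 hp; omega), map_zero, mul_zero]

theorem eq_of_mul_eq_add_mul_sq {A B Z f g : R⟦X⟧} (hB : IsUnit B) (hZ : constantCoeff Z = 0)
    (hf : B * f = A + Z * f ^ 2) (hg : B * g = A + Z * g ^ 2) : f = g := by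
  obtain ⟨w, rfl⟩ := X_dvd_iff.2 hZ
  obtain ⟨v, hv⟩ := hB.exists_left_inv
  have key : f - g = X * (v * w * (f + g)) * (f - g) := by
    linear_combination v * (hf - hg) - (f - g) * hv
  exact sub_eq_zero.1 (eq_zero_of_eq_X_mul key)

theorem catalanSeries_subst {z : R⟦X⟧} (hz : constantCoeff z = 0) :
    (catalanSeries.map (Nat.castRingHom R)).subst z =
      1 + z * (catalanSeries.map (Nat.castRingHom R)).subst z ^ 2 := by
  have := congrArg (fun f => (f.map (Nat.castRingHom R)).subst z) catalanSeries_sq_mul_X_add_one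
  simp only [map_add, map_mul, map_pow, map_one, map_X] at this
  rw [← coe_substAlgHom (HasSubst.of_constantCoeff_zero' hz)] at this ⊢
  simp only [map_add, map_mul, map_pow, map_one, substAlgHom_X] at this
  linear_combination -this

end PowerSeries

section Structures

variable {n lam r : ℕ} {M : Finset (ℕ × ℕ)}

theorem IsCanSecStr.eq_of_fst_eq (h : IsCanSecStr n lam r M) {p q : ℕ × ℕ} (hp : p ∈ M)
    (hq : q ∈ M) (he : p.1 = q.1) : p = q :=
  by_contra fun hne => (h.2.1 p hp q hq hne).1 he

theorem IsCanSecStr.eq_of_snd_eq (h : IsCanSecStr n lam r M) {p q : ℕ × ℕ} (hp : p ∈ M)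
    (hq : q ∈ M) (he : p.2 = q.2) : p = q :=
  by_contra fun hne => (h.2.1 p hp q hq hne).2.2.2 he

theorem IsCanSecStr.mono {n' : ℕ} (h : IsCanSecStr n lam r M) (hM : ∀ p ∈ M, p.2 ≤ n') :
    IsCanSecStr n' lam r M :=
  ⟨fun p hp => ⟨(h.1 p hp).1, (h.1 p hp).2.1, hM p hp⟩, h.2⟩

theorem IsCanSecStr.stack_mem_of_outer (h : IsCanSecStr n lam r M) (h1n : (1, n) ∈ M) {t : ℕ}
    (ht : t < r) : (1 + t, n - t) ∈ M :=
  h.2.2.2 _ h1n (fun h0 => absurd (h.1 _ h0).1 (by simp)) t ht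

theorem IsCanSecStr.snd_eq_of_fst_le (h : IsCanSecStr n lam r M) (h1n : (1, n) ∈ M)
    {p : ℕ × ℕ} (hp : p ∈ M) (hpr : p.1 ≤ r) : p.2 = n + 1 - p.1 := by
  have h1 := (h.1 p hp).1
  have hst := h.stack_mem_of_outer h1n (t := p.1 - 1) (by omega)
  rw [h.eq_of_fst_eq hp hst (by simp only; omega)]
  simp only
  omega

theorem IsCanSecStr.fst_eq_of_le_snd (h : IsCanSecStr n lam r M) (h1n : (1, n) ∈ M)
    {p : ℕ × ℕ} (hp : p ∈ M) (hpr : n + 1 ≤ p.2 + r) : p.1 = n + 1 - p.2 := by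
  have h1 := h.1 p hp
  have hst := h.stack_mem_of_outer h1n (t := n - p.2) (by omega)
  rw [h.eq_of_snd_eq hp hst (by simp only; omega)]
  simp only
  omega

theorem IsCanSecStr.snd_lt_or_le_fst (h : IsCanSecStr n lam r M) {i : ℕ} (hin : (i, n) ∈ M)
    {p : ℕ × ℕ} (hp : p ∈ M) : p.2 < i ∨ i ≤ p.1 := by
  by_contra! hcon
  have hne : p ≠ (i, n) := fun he => by simp [he] at hcon
  have := h.2.1 p hp _ hin hne
  have := h.1 p hp
  exact h.2.2.1 p hp _ hin (by simp only at *; omega)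

/-- A parent missing from the union is missing from each part, so the stack condition is
inherited. -/
theorem IsCanSecStr.union {L R : Finset (ℕ × ℕ)} (hL : IsCanSecStr n lam r L)
    (hR : IsCanSecStr n lam r R)
    (hsep : ∀ p ∈ L, ∀ q ∈ R, p.1 ≠ q.1 ∧ p.1 ≠ q.2 ∧ p.2 ≠ q.1 ∧ p.2 ≠ q.2 ∧
      ¬ (p.1 < q.1 ∧ q.1 < p.2 ∧ p.2 < q.2) ∧ ¬ (q.1 < p.1 ∧ p.1 < q.2 ∧ q.2 < p.2)) :
    IsCanSecStr n lam r (L ∪ R) := by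
  refine ⟨fun p hp => ?_, fun p hp q hq hne => ?_, fun p hp q hq => ?_, fun p hp hpar t ht => ?_⟩
  · rcases mem_union.1 hp with hp | hp
    exacts [hL.1 p hp, hR.1 p hp]
  · rcases mem_union.1 hp with hp | hp <;> rcases mem_union.1 hq with hq | hq
    · exact hL.2.1 p hp q hq hne
    · have := hsep p hp q hq; omega
    · have := hsep q hq p hp; omega
    · exact hR.2.1 p hp q hq hne
  · rcases mem_union.1 hp with hp | hp <;> rcases mem_union.1 hq with hq | hq
    · exact hL.2.2.1 p hp q hq
    · have := hsep p hp q hq; omega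
    · have := hsep q hq p hp; omega
    · exact hR.2.2.1 p hp q hq
  · rw [mem_union, not_or] at hpar
    rcases mem_union.1 hp with hp | hp
    exacts [mem_union_left _ (hL.2.2.2 p hp hpar.1 t ht),
      mem_union_right _ (hR.2.2.2 p hp hpar.2 t ht)]

def arcsWithin (a b : ℕ) (M : Finset (ℕ × ℕ)) : Finset (ℕ × ℕ) :=
  M.filter fun p => a ≤ p.1 ∧ p.2 ≤ b

theorem mem_arcsWithin {a b : ℕ} {p : ℕ × ℕ} :
    p ∈ arcsWithin a b M ↔ p ∈ M ∧ a ≤ p.1 ∧ p.2 ≤ b :=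
  mem_filter

theorem arcsWithin_union {a b : ℕ} (L R : Finset (ℕ × ℕ)) :
    arcsWithin a b (L ∪ R) = arcsWithin a b L ∪ arcsWithin a b R :=
  filter_union _ _ _

theorem arcsWithin_of_forall {a b : ℕ} (h : ∀ p ∈ M, a ≤ p.1 ∧ p.2 ≤ b) : arcsWithin a b M = M :=
  filter_true_of_mem h

theorem arcsWithin_of_forall_not {a b : ℕ} (h : ∀ p ∈ M, ¬ (a ≤ p.1 ∧ p.2 ≤ b)) :
    arcsWithin a b M = ∅ :=
  filter_false_of_mem h

/-- Only the arc `(a, b)` can lose its parent to the outside of the window, hence `hab`. -/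
theorem IsCanSecStr.restrict {a b : ℕ} (h : IsCanSecStr n lam r M)
    (hleft : ∀ p ∈ M, p.1 < a → p.2 < a ∨ b < p.2)
    (hright : ∀ p ∈ M, a ≤ p.1 → p.1 ≤ b → p.2 ≤ b)
    (hab : (a, b) ∈ M → ∀ t < r, (a + t, b - t) ∈ M) :
    IsCanSecStr b lam r (arcsWithin a b M) := by
  simp only [IsCanSecStr, mem_arcsWithin]
  refine ⟨fun p hp => ⟨(h.1 p hp.1).1, (h.1 p hp.1).2.1, hp.2.2⟩,
    fun p hp q hq => h.2.1 p hp.1 q hq.1, fun p hp q hq => h.2.2.1 p hp.1 q hq.1,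
    fun p hp hpar t ht => ?_⟩
  obtain ⟨hpM, hap, hpb⟩ := hp
  have hb := h.1 p hpM
  by_cases hparM : (p.1 - 1, p.2 + 1) ∈ M
  · have hedge : p = (a, b) := by
      have hout : ¬ (a ≤ p.1 - 1 ∧ p.2 + 1 ≤ b) := fun hw => hpar ⟨hparM, hw⟩
      have hl := hleft _ hparM
      have hr := hright _ hparM
      simp only at hl hr
      ext <;> simp only <;> omega
    subst hedge
    have hst := hab hpM t ht
    have := h.1 _ hst
    exact ⟨hst, by simp only; omega, by simp only at this ⊢; omega⟩
  · have hst := h.2.2.2 p hpM hparM t ht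
    have := h.1 _ hst
    exact ⟨hst, by omega, by omega⟩

def shiftArcs (k : ℕ) (V : Finset (ℕ × ℕ)) : Finset (ℕ × ℕ) :=
  V.map ((addRightEmbedding k).prodMap (addRightEmbedding k))

def unshiftArcs (k : ℕ) (N : Finset (ℕ × ℕ)) : Finset (ℕ × ℕ) :=
  N.image fun p => (p.1 - k, p.2 - k)

theorem mem_shiftArcs {k : ℕ} {V : Finset (ℕ × ℕ)} {q : ℕ × ℕ} :
    q ∈ shiftArcs k V ↔ k ≤ q.1 ∧ k ≤ q.2 ∧ (q.1 - k, q.2 - k) ∈ V := by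
  simp only [shiftArcs, mem_map, Function.Embedding.coe_prodMap, Prod.map, addRightEmbedding_apply]
  constructor
  · rintro ⟨p, hp, rfl⟩
    simpa using hp
  · rintro ⟨h1, h2, hq⟩
    exact ⟨_, hq, by ext <;> simp only <;> omega⟩

theorem forall_mem_shiftArcs {k : ℕ} {V : Finset (ℕ × ℕ)} {P : ℕ × ℕ → Prop} :
    (∀ q ∈ shiftArcs k V, P q) ↔ ∀ p ∈ V, P (p.1 + k, p.2 + k) :=
  forall_mem_map

theorem forall_mem_unshiftArcs {k : ℕ} {N : Finset (ℕ × ℕ)} {P : ℕ × ℕ → Prop} :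
    (∀ p ∈ unshiftArcs k N, P p) ↔ ∀ q ∈ N, P (q.1 - k, q.2 - k) :=
  forall_mem_image

theorem mem_unshiftArcs_of_add_mem {k a b : ℕ} {N : Finset (ℕ × ℕ)} (h : (a + k, b + k) ∈ N) :
    (a, b) ∈ unshiftArcs k N :=
  mem_image.2 ⟨_, h, by simp⟩

theorem card_shiftArcs (k : ℕ) (V : Finset (ℕ × ℕ)) : #(shiftArcs k V) = #V :=
  card_map _

theorem unshiftArcs_shiftArcs (k : ℕ) (V : Finset (ℕ × ℕ)) :
    unshiftArcs k (shiftArcs k V) = V := by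
  simp [unshiftArcs, shiftArcs, map_eq_image, image_image, Function.comp_def]

theorem shiftArcs_unshiftArcs {k : ℕ} {N : Finset (ℕ × ℕ)} (hN : ∀ p ∈ N, k ≤ p.1 ∧ k ≤ p.2) :
    shiftArcs k (unshiftArcs k N) = N := by
  rw [shiftArcs, map_eq_image, unshiftArcs, image_image]
  refine (image_congr fun p hp => ?_).trans image_id
  have := hN p hp
  ext <;> simp <;> omega

theorem isCanSecStr_shiftArcs_iff {k : ℕ} {V : Finset (ℕ × ℕ)}
    (hV : ∀ p ∈ V, 1 ≤ p.1 ∧ p.1 ≤ p.2) :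
    IsCanSecStr (n + k) lam r (shiftArcs k V) ↔ IsCanSecStr n lam r V := by
  have hmem : ∀ a b, (a + k, b + k) ∈ shiftArcs k V ↔ (a, b) ∈ V := fun a b => by
    simp [mem_shiftArcs]
  simp only [IsCanSecStr, forall_mem_shiftArcs]
  refine and_congr (forall₂_congr fun p hp => ?_) (and_congr
    (forall₂_congr fun p _ => forall₂_congr fun q _ => ?_)
    (and_congr (forall₂_congr fun p _ => forall₂_congr fun q _ => ?_)
      (forall₂_congr fun p hp => ?_)))
  · have := hV p hp
    omega
  · simp only [ne_eq, Prod.ext_iff]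
    omega
  · omega
  · have hpar : (p.1 + k - 1, p.2 + k + 1) ∈ shiftArcs k V ↔ (p.1 - 1, p.2 + 1) ∈ V := by
      rw [← hmem]
      have := hV p hp
      congr! 2 <;> omega
    have hst : ∀ t, (p.1 + k + t, p.2 + k - t) ∈ shiftArcs k V ↔ (p.1 + t, p.2 - t) ∈ V := by
      intro t
      rw [mem_shiftArcs, show (p.1 + k + t - k, p.2 + k - t - k) = (p.1 + t, p.2 - t) from
        Prod.ext (by omega) (by omega)]
      refine ⟨fun h => h.2.2, fun h => ?_⟩
      have := hV _ h
      exact ⟨by omega, by simp only at this; omega, h⟩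
    simp only [hpar, hst]

theorem IsCanSecStr.shift {m k : ℕ} {V : Finset (ℕ × ℕ)} (hV : IsCanSecStr m lam r V) :
    IsCanSecStr (k + m) lam r (shiftArcs k V) := by
  rw [add_comm]
  exact (isCanSecStr_shiftArcs_iff fun p hp => by have := hV.1 p hp; omega).2 hV

theorem IsCanSecStr.bounds_of_mem_shiftArcs {m k : ℕ} {V : Finset (ℕ × ℕ)}
    (hV : IsCanSecStr m lam r V) {q : ℕ × ℕ} (hq : q ∈ shiftArcs k V) :
    k + 1 ≤ q.1 ∧ q.1 + lam ≤ q.2 ∧ q.2 ≤ k + m := by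
  obtain ⟨h1, h2, hq⟩ := mem_shiftArcs.1 hq
  have := hV.1 _ hq
  simp only at this
  omega

theorem IsCanSecStr.unshiftArcs_arcsWithin {k c : ℕ} (h : IsCanSecStr n lam r M)
    (hleft : ∀ p ∈ M, p.1 < k + 1 → p.2 < k + 1 ∨ k + c < p.2)
    (hright : ∀ p ∈ M, k + 1 ≤ p.1 → p.1 ≤ k + c → p.2 ≤ k + c)
    (hab : (k + 1, k + c) ∈ M → ∀ t < r, (k + 1 + t, k + c - t) ∈ M) :
    IsCanSecStr c lam r (unshiftArcs k (arcsWithin (k + 1) (k + c) M)) := by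
  set N := arcsWithin (k + 1) (k + c) M
  have hW : IsCanSecStr (k + c) lam r N := h.restrict hleft hright hab
  have hN : ∀ p ∈ N, k + 1 ≤ p.1 ∧ p.1 ≤ p.2 := fun p hp => by
    have := (mem_arcsWithin.1 hp).2.1; have := hW.1 p hp; omega
  have hV : ∀ p ∈ unshiftArcs k N, 1 ≤ p.1 ∧ p.1 ≤ p.2 :=
    forall_mem_unshiftArcs.2 fun q hq => by have := hN q hq; simp only; omega
  refine (isCanSecStr_shiftArcs_iff (k := k) hV).1 ?_
  rwa [shiftArcs_unshiftArcs fun p hp => by have := hN p hp; omega, add_comm]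

section Concat

variable {a c : ℕ} {L V : Finset (ℕ × ℕ)}

theorem IsCanSecStr.union_shiftArcs (hL : IsCanSecStr a lam r L) (hV : IsCanSecStr c lam r V) :
    IsCanSecStr (a + c) lam r (L ∪ shiftArcs a V) := by
  refine (hL.mono fun p hp => ?_).union hV.shift fun p hp q hq => ?_
  · have := hL.1 p hp; omega
  · have := hL.1 p hp; have := hV.bounds_of_mem_shiftArcs hq
    omega

theorem IsCanSecStr.arcsWithin_union_shiftArcs (hL : IsCanSecStr a lam r L)
    (hV : IsCanSecStr c lam r V) :
    arcsWithin 1 a (L ∪ shiftArcs a V) = L ∧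
      arcsWithin (a + 1) (a + c) (L ∪ shiftArcs a V) = shiftArcs a V := by
  have hLb := fun p (hp : p ∈ L) => hL.1 p hp
  have hVb := fun q (hq : q ∈ shiftArcs a V) => hV.bounds_of_mem_shiftArcs hq
  rw [arcsWithin_union, arcsWithin_union,
    arcsWithin_of_forall (M := L) (fun p hp => by have := hLb p hp; omega),
    arcsWithin_of_forall_not (M := shiftArcs a V) (fun p hp => by have := hVb p hp; omega),
    arcsWithin_of_forall_not (M := L) (fun p hp => by have := hLb p hp; omega),
    arcsWithin_of_forall (fun p hp => by have := hVb p hp; omega), union_empty, empty_union]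
  exact ⟨rfl, rfl⟩

theorem IsCanSecStr.arcsWithin_left (hM : IsCanSecStr (a + c) lam r M)
    (hlast : (a + 1, a + c) ∈ M) : IsCanSecStr a lam r (arcsWithin 1 a M) :=
  hM.restrict (fun p hp h1 => by have := hM.1 p hp; omega)
    (fun p hp _ hpa => by have := hM.snd_lt_or_le_fst hlast hp; omega)
    (fun h1a => hM.2.2.2 _ h1a fun h0 => absurd (hM.1 _ h0).1 (by simp))

theorem IsCanSecStr.unshiftArcs_arcsWithin_right (hM : IsCanSecStr (a + c) lam r M)
    (hlast : (a + 1, a + c) ∈ M) :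
    IsCanSecStr c lam r (unshiftArcs a (arcsWithin (a + 1) (a + c) M)) :=
  hM.unshiftArcs_arcsWithin (fun p hp hpa => by have := hM.snd_lt_or_le_fst hlast hp; omega)
    (fun p hp _ _ => (hM.1 p hp).2.2)
    (fun h => hM.2.2.2 _ h fun h0 => absurd (hM.1 _ h0).2.2 (by simp))

theorem IsCanSecStr.arcsWithin_union_arcsWithin (hM : IsCanSecStr (a + c) lam r M)
    (hlast : (a + 1, a + c) ∈ M) : arcsWithin 1 a M ∪ arcsWithin (a + 1) (a + c) M = M := by
  rw [arcsWithin, arcsWithin, filter_union_right, filter_true_of_mem fun p hp => ?_]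
  have := hM.1 p hp; have := hM.snd_lt_or_le_fst hlast hp
  omega

end Concat

section Nest

variable {m s : ℕ} {V : Finset (ℕ × ℕ)}

def stackArcs (s n : ℕ) : Finset (ℕ × ℕ) :=
  (Icc 1 s).image fun i => (i, n + 1 - i)

theorem mem_stackArcs {q : ℕ × ℕ} :
    q ∈ stackArcs s n ↔ 1 ≤ q.1 ∧ q.1 ≤ s ∧ q.2 = n + 1 - q.1 := by
  simp only [stackArcs, mem_image, mem_Icc]
  constructor
  · rintro ⟨i, hi, rfl⟩
    exact ⟨hi.1, hi.2, rfl⟩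
  · rintro ⟨h1, h2, h3⟩
    exact ⟨q.1, ⟨h1, h2⟩, Prod.ext rfl h3.symm⟩

theorem card_stackArcs (s n : ℕ) : #(stackArcs s n) = s := by
  rw [stackArcs, card_image_of_injective _ fun i j h => (Prod.mk.inj h).1, Nat.card_Icc,
    Nat.add_sub_cancel]

def nestArcs (s n : ℕ) (V : Finset (ℕ × ℕ)) : Finset (ℕ × ℕ) :=
  stackArcs s n ∪ shiftArcs s V

def innerArcs (s m : ℕ) (M : Finset (ℕ × ℕ)) : Finset (ℕ × ℕ) :=
  unshiftArcs s (arcsWithin (s + 1) (s + m) M)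

/-- When `s < r`, the stack of the outer arc continues into the outer arc `(1, m)` of `V`. -/
theorem IsCanSecStr.nest (hV : IsCanSecStr m lam r V) (hm : lam ≤ m + 1)
    (hs : r ≤ s ∨ (1, m) ∈ V) (hn : n = m + 2 * s) : IsCanSecStr n lam r (nestArcs s n V) := by
  subst hn
  have hVs : IsCanSecStr (m + 2 * s) lam r (shiftArcs s V) := hV.shift.mono fun q hq => by
    have := hV.bounds_of_mem_shiftArcs hq; omega
  have hVb := fun q (hq : q ∈ shiftArcs s V) => hV.bounds_of_mem_shiftArcs hq
  refine ⟨fun p hp => ?_, fun p hp q hq hne => ?_, fun p hp q hq => ?_, fun p hp hpar t ht => ?_⟩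
  · rcases mem_union.1 hp with hp | hp
    · have := mem_stackArcs.1 hp; omega
    · exact hVs.1 p hp
  · rcases mem_union.1 hp with hp | hp <;> rcases mem_union.1 hq with hq | hq
    · have := mem_stackArcs.1 hp; have := mem_stackArcs.1 hq
      have : p.1 ≠ q.1 := fun h1 => hne (Prod.ext h1 (by omega))
      omega
    · have := mem_stackArcs.1 hp; have := hVb q hq; omega
    · have := hVb p hp; have := mem_stackArcs.1 hq; omega
    · exact hVs.2.1 p hp q hq hne
  · rcases mem_union.1 hp with hp | hp <;> rcases mem_union.1 hq with hq | hq
    · have := mem_stackArcs.1 hp; have := mem_stackArcs.1 hq; omega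
    · have := mem_stackArcs.1 hp; have := hVb q hq; omega
    · have := hVb p hp; have := mem_stackArcs.1 hq; omega
    · exact hVs.2.2.1 p hp q hq
  · rw [nestArcs, mem_union, not_or] at hpar
    rcases mem_union.1 hp with hp | hp
    · have hp' := mem_stackArcs.1 hp
      have hp1 : p.1 = 1 := by
        by_contra
        exact hpar.1 (mem_stackArcs.2 ⟨by omega, by omega, by simp only; omega⟩)
      rcases lt_or_ge t s with hts | hts
      · exact mem_union_left _ (mem_stackArcs.2 ⟨by simp only; omega, by simp only; omega,
          by simp only; omega⟩)
      · have hVt := hV.stack_mem_of_outer (hs.resolve_left (by omega)) (t := t - s) (by omega)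
        have := hV.1 _ hVt
        simp only at this
        refine mem_union_right _ (mem_shiftArcs.2 ⟨by simp only; omega, by simp only; omega, ?_⟩)
        convert hVt using 2 <;> simp only <;> omega
    · exact mem_union_right _ (hVs.2.2.2 p hp hpar.2 t ht)

theorem IsCanSecStr.inner (h : IsCanSecStr n lam r M) (h1n : (1, n) ∈ M) (hs : s ≤ r)
    (hn : n = m + 2 * s) (hab : (s + 1, s + m) ∈ M → ∀ t < r, (s + 1 + t, s + m - t) ∈ M) :
    IsCanSecStr m lam r (innerArcs s m M) := by
  refine h.unshiftArcs_arcsWithin (fun p hp hps => ?_) (fun p hp hps _ => ?_) hab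
  · have := h.snd_eq_of_fst_le h1n hp (by omega)
    omega
  · by_contra hp2
    have := h.fst_eq_of_le_snd h1n hp (by omega)
    omega

theorem IsCanSecStr.innerArcs_nestArcs (hV : IsCanSecStr m lam r V) (hn : n = m + 2 * s) :
    innerArcs s m (nestArcs s n V) = V := by
  subst hn
  rw [innerArcs, nestArcs, arcsWithin_union, arcsWithin_of_forall_not fun p hp => ?_,
    arcsWithin_of_forall fun p hp => ?_, empty_union, unshiftArcs_shiftArcs]
  · have := hV.bounds_of_mem_shiftArcs hp; omega
  · have := mem_stackArcs.1 hp; omega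

theorem IsCanSecStr.nestArcs_innerArcs (h : IsCanSecStr n lam r M) (h1n : (1, n) ∈ M)
    (hs : s ≤ r) (hn : n = m + 2 * s) : nestArcs s n (innerArcs s m M) = M := by
  rw [nestArcs, innerArcs, shiftArcs_unshiftArcs fun p hp => by
    have := (mem_arcsWithin.1 hp).2; have := h.1 p (mem_arcsWithin.1 hp).1; omega]
  ext q
  rw [mem_union, mem_stackArcs, mem_arcsWithin]
  constructor
  · rintro (⟨hq1, hqs, hq2⟩ | ⟨hq, -⟩)
    · convert h.stack_mem_of_outer h1n (t := q.1 - 1) (by omega) using 1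
      ext <;> simp only <;> omega
    · exact hq
  · intro hq
    have := h.1 q hq
    by_cases hqs : q.1 ≤ s
    · have := h.snd_eq_of_fst_le h1n hq (by omega)
      omega
    · by_cases hq2 : q.2 ≤ s + m
      · exact Or.inr ⟨hq, by omega, hq2⟩
      · have := h.fst_eq_of_le_snd h1n hq (by omega)
        omega

theorem IsCanSecStr.card_nestArcs (hV : IsCanSecStr m lam r V) (hn : n = m + 2 * s) :
    #(nestArcs s n V) = s + #V := by
  subst hn
  rw [nestArcs, card_union_of_disjoint (disjoint_left.2 fun p hpS hpV => ?_), card_stackArcs,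
    card_shiftArcs]
  have := mem_stackArcs.1 hpS; have := hV.bounds_of_mem_shiftArcs hpV
  omega

end Nest

end Structures

section Counting

variable {n lam r : ℕ} {M : Finset (ℕ × ℕ)}

open scoped Classical in
noncomputable def canStructs (lam r n : ℕ) : Finset (Finset (ℕ × ℕ)) :=
  (Icc 1 n ×ˢ Icc 1 n).powerset.filter (IsCanSecStr n lam r)

noncomputable def closedStructs (lam r n : ℕ) : Finset (Finset (ℕ × ℕ)) :=
  (canStructs lam r n).filter ((1, n) ∈ ·)

noncomputable def structPoly (lam r n : ℕ) : Polynomial ℚ :=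
  ∑ M ∈ canStructs lam r n, Polynomial.X ^ #M

noncomputable def closedPoly (lam r n : ℕ) : Polynomial ℚ :=
  ∑ M ∈ closedStructs lam r n, Polynomial.X ^ #M

theorem mem_canStructs : M ∈ canStructs lam r n ↔ IsCanSecStr n lam r M := by
  classical
  simp only [canStructs, mem_filter, mem_powerset, and_iff_right_iff_imp]
  intro h p hp
  have := h.1 p hp
  simp only [mem_product, mem_Icc]
  omega

theorem mem_closedStructs : M ∈ closedStructs lam r n ↔ IsCanSecStr n lam r M ∧ (1, n) ∈ M := by
  rw [closedStructs, mem_filter, mem_canStructs]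

theorem card_le_of_mem_canStructs (hM : M ∈ canStructs lam r n) : #M ≤ n := by
  rw [mem_canStructs] at hM
  calc #M = #(M.image Prod.snd) :=
        (card_image_of_injOn fun p hp q hq => hM.eq_of_snd_eq hp hq).symm
    _ ≤ #(Icc 1 n) := card_le_card fun x hx => by
        obtain ⟨p, hp, rfl⟩ := mem_image.1 hx
        have := hM.1 p hp
        exact mem_Icc.2 ⟨by omega, this.2.2⟩
    _ = n := by simp

theorem coeff_Sgf (n : ℕ) : PowerSeries.coeff n (Sgf lam r) = structPoly lam r n := by
  classical
  have hcount : ∀ l, sCount lam r n l = #((canStructs lam r n).filter (#· = l)) := fun l => by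
    rw [sCount, ← Nat.card_eq_finsetCard]
    exact Nat.card_congr (Equiv.subtypeEquivRight fun M => by simp [mem_canStructs])
  rw [Sgf, PowerSeries.coeff_mk, structPoly, ← sum_fiberwise_of_maps_to (g := card)
    fun M hM => mem_range.2 (Nat.lt_succ_of_le (card_le_of_mem_canStructs hM))]
  refine sum_congr rfl fun l _ => ?_
  rw [hcount, sum_congr rfl fun M hM => by rw [(mem_filter.1 hM).2], sum_const,
    nsmul_eq_mul, Polynomial.C_eq_natCast]

theorem structPoly_of_le (h : n ≤ lam) : structPoly lam r n = 1 := by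
  have : canStructs lam r n = {∅} := by
    ext M
    rw [mem_singleton, mem_canStructs]
    refine ⟨fun hM => eq_empty_of_forall_notMem fun p hp => ?_, fun hM => ?_⟩
    · have := hM.1 p hp; omega
    · subst hM; exact ⟨by simp, by simp, by simp, by simp⟩
  simp [structPoly, this]

theorem closedPoly_of_lt (hr : 1 ≤ r) (h : n + 1 < 2 * r + lam) : closedPoly lam r n = 0 := by
  have : closedStructs lam r n = ∅ := eq_empty_of_forall_notMem fun M hM => by
    obtain ⟨hM, h1n⟩ := mem_closedStructs.1 hM
    have := hM.1 _ (hM.stack_mem_of_outer h1n (t := r - 1) (by omega))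
    simp only at this
    omega
  simp [closedPoly, this]

theorem sum_canStructs_filter_mem_eq (a c : ℕ) :
    ∑ M ∈ (canStructs lam r (a + c)).filter ((a + 1, a + c) ∈ ·), Polynomial.X ^ #M =
      structPoly lam r a * closedPoly lam r c := by
  rw [structPoly, closedPoly, sum_mul_sum, ← sum_product']
  simp only [← pow_add]
  symm
  refine sum_nbij' (fun LV => LV.1 ∪ shiftArcs a LV.2)
    (fun M => (arcsWithin 1 a M, unshiftArcs a (arcsWithin (a + 1) (a + c) M)))
    (fun LV hLV => ?_) (fun M hM => ?_) (fun LV hLV => ?_) (fun M hM => ?_) (fun LV hLV => ?_)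
  · simp only [mem_filter, mem_product, mem_canStructs, mem_closedStructs] at hLV ⊢
    exact ⟨hLV.1.union_shiftArcs hLV.2.1,
      mem_union_right _ (mem_shiftArcs.2 ⟨by omega, by omega, by simpa using hLV.2.2⟩)⟩
  · simp only [mem_filter, mem_product, mem_canStructs, mem_closedStructs] at hM ⊢
    refine ⟨hM.1.arcsWithin_left hM.2, hM.1.unshiftArcs_arcsWithin_right hM.2,
      mem_unshiftArcs_of_add_mem ?_⟩
    simpa [add_comm] using mem_arcsWithin.2 ⟨hM.2, le_rfl, le_rfl⟩
  · simp only [mem_product, mem_canStructs, mem_closedStructs] at hLV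
    obtain ⟨hL, hV⟩ := hLV.1.arcsWithin_union_shiftArcs hLV.2.1
    rw [hL, hV, unshiftArcs_shiftArcs]
  · simp only [mem_filter, mem_canStructs] at hM
    rw [shiftArcs_unshiftArcs fun p hp => by
        have := (mem_arcsWithin.1 hp).2; have := hM.1.1 p (mem_arcsWithin.1 hp).1; omega,
      hM.1.arcsWithin_union_arcsWithin hM.2]
  · simp only [mem_product, mem_canStructs, mem_closedStructs] at hLV
    rw [card_union_of_disjoint (disjoint_left.2 fun p hpL hpV => ?_), card_shiftArcs]
    have := hLV.1.1 p hpL; have := hLV.2.1.bounds_of_mem_shiftArcs hpV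
    omega

theorem canStructs_succ_filter_forall_snd_ne (n : ℕ) :
    (canStructs lam r (n + 1)).filter (fun M => ∀ p ∈ M, p.2 ≠ n + 1) = canStructs lam r n := by
  ext M
  simp only [mem_filter, mem_canStructs]
  refine ⟨fun ⟨hM, hlast⟩ => hM.mono fun p hp => ?_, fun hM => ⟨hM.mono fun p hp => ?_, ?_⟩⟩
  · have := hM.1 p hp; have := hlast p hp; omega
  · have := hM.1 p hp; omega
  · intro p hp; have := hM.1 p hp; omega

theorem canStructs_succ_filter_not_forall_snd_ne (n : ℕ) :
    (canStructs lam r (n + 1)).filter (fun M => ¬ ∀ p ∈ M, p.2 ≠ n + 1) =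
      (range (n + 1)).biUnion fun a => (canStructs lam r (n + 1)).filter ((a + 1, n + 1) ∈ ·) := by
  ext M
  simp only [mem_filter, mem_biUnion, mem_range, not_forall, not_not]
  constructor
  · rintro ⟨hM, p, hp, hpn⟩
    have := (mem_canStructs.1 hM).1 p hp
    exact ⟨p.1 - 1, by omega, hM, by convert hp using 1; ext <;> simp only <;> omega⟩
  · rintro ⟨a, -, hM, hlast⟩
    exact ⟨hM, _, hlast, rfl⟩

theorem structPoly_succ (n : ℕ) :
    structPoly lam r (n + 1) = structPoly lam r n +
      ∑ a ∈ range (n + 1), structPoly lam r a * closedPoly lam r (n + 1 - a) := by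
  classical
  have hdisj : (range (n + 1) : Set ℕ).PairwiseDisjoint
      fun a => (canStructs lam r (n + 1)).filter ((a + 1, n + 1) ∈ ·) := by
    intro a _ b _ hab
    refine disjoint_filter.2 fun M hM ha hb => hab ?_
    have := (mem_canStructs.1 hM).eq_of_snd_eq ha hb rfl
    simp only [Prod.mk.injEq] at this
    omega
  rw [structPoly, ← sum_filter_add_sum_filter_not _ fun M => ∀ p ∈ M, p.2 ≠ n + 1,
    canStructs_succ_filter_forall_snd_ne, canStructs_succ_filter_not_forall_snd_ne,
    sum_biUnion hdisj]
  refine congrArg _ (sum_congr rfl fun a ha => ?_)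
  obtain ⟨c, hc⟩ : ∃ c, n + 1 = a + c := ⟨n + 1 - a, by have := mem_range.1 ha; omega⟩
  rw [hc, sum_canStructs_filter_mem_eq a c, Nat.add_sub_cancel_left]

theorem sum_closedStructs_filter_mem_eq (hr : 1 ≤ r) (m : ℕ) :
    ∑ M ∈ (closedStructs lam r (m + 2)).filter ((r + 1, m + 2 - r) ∈ ·), Polynomial.X ^ #M =
      Polynomial.X * closedPoly lam r m := by
  rw [closedPoly, mul_sum]
  symm
  refine sum_nbij' (nestArcs 1 (m + 2)) (innerArcs 1 m) (fun V hV => ?_) (fun M hM => ?_)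
    (fun V hV => ?_) (fun M hM => ?_) (fun V hV => ?_)
  · obtain ⟨hV, h1m⟩ := mem_closedStructs.1 hV
    have hm := (hV.1 _ h1m).2.1
    have hVr := hV.stack_mem_of_outer h1m (t := r - 1) (by omega)
    have := hV.1 _ hVr
    simp only at hm this
    refine mem_filter.2 ⟨mem_closedStructs.2 ⟨hV.nest (by omega) (Or.inr h1m) rfl,
      mem_union_left _ (mem_stackArcs.2 ⟨le_rfl, le_rfl, rfl⟩)⟩,
      mem_union_right _ (mem_shiftArcs.2 ⟨by simp, by simp; omega, ?_⟩)⟩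
    convert hVr using 1
    ext <;> simp only <;> omega
  · obtain ⟨hM, hr1⟩ := mem_filter.1 hM
    obtain ⟨hM, h1n⟩ := mem_closedStructs.1 hM
    -- the stack of `(1, m + 2)` has length `r + 1`, so the one of `(2, m + 1)` has length `r`
    have hstack : ∀ t < r, (1 + 1 + t, 1 + m - t) ∈ M := fun t ht => by
      rcases lt_or_ge (t + 1) r with htr | htr
      · convert hM.stack_mem_of_outer h1n htr using 1
        ext <;> simp only <;> omega
      · convert hr1 using 1
        ext <;> simp only <;> omega
    refine mem_closedStructs.2 ⟨hM.inner h1n hr (by ring) fun _ => hstack,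
      mem_unshiftArcs_of_add_mem (mem_arcsWithin.2 ⟨?_, le_rfl, by omega⟩)⟩
    simpa [add_comm] using hstack 0 hr
  · exact (mem_closedStructs.1 hV).1.innerArcs_nestArcs rfl
  · obtain ⟨hM, h1n⟩ := mem_closedStructs.1 (mem_filter.1 hM).1
    exact hM.nestArcs_innerArcs h1n hr (by ring)
  · rw [(mem_closedStructs.1 hV).1.card_nestArcs rfl, pow_add, pow_one]

theorem sum_closedStructs_filter_not_mem_eq (hr : 1 ≤ r) {m : ℕ} (hm : lam ≤ m + 1) :
    ∑ M ∈ (closedStructs lam r (m + 2 * r)).filter ((r + 1, m + r) ∉ ·), Polynomial.X ^ #M =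
      (Polynomial.X ^ r : Polynomial ℚ) *
        ∑ V ∈ (canStructs lam r m).filter ((1, m) ∉ ·), Polynomial.X ^ #V := by
  rw [mul_sum]
  symm
  refine sum_nbij' (nestArcs r (m + 2 * r)) (innerArcs r m) (fun V hV => ?_) (fun M hM => ?_)
    (fun V hV => ?_) (fun M hM => ?_) (fun V hV => ?_)
  · obtain ⟨hV, h1m⟩ := mem_filter.1 hV
    rw [mem_canStructs] at hV
    refine mem_filter.2 ⟨mem_closedStructs.2 ⟨hV.nest hm (Or.inl le_rfl) rfl,
      mem_union_left _ (mem_stackArcs.2 ⟨le_rfl, hr, by omega⟩)⟩, fun hmem => ?_⟩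
    rcases mem_union.1 hmem with h | h
    · have := mem_stackArcs.1 h; simp only at this; omega
    · exact h1m (by simpa using (mem_shiftArcs.1 h).2.2)
  · obtain ⟨hM, hr1⟩ := mem_filter.1 hM
    obtain ⟨hM, h1n⟩ := mem_closedStructs.1 hM
    have hN : ∀ p ∈ arcsWithin (r + 1) (r + m) M, r ≤ p.1 ∧ r ≤ p.2 := fun p hp => by
      have := (mem_arcsWithin.1 hp).2; have := hM.1 p (mem_arcsWithin.1 hp).1; omega
    refine mem_filter.2 ⟨mem_canStructs.2 (hM.inner h1n le_rfl rfl
      fun h => absurd (by rwa [add_comm r m] at h) hr1), fun h1m => hr1 ?_⟩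
    have : (1 + r, m + r) ∈ shiftArcs r (innerArcs r m M) :=
      mem_shiftArcs.2 ⟨by omega, by omega, by simpa using h1m⟩
    rw [innerArcs, shiftArcs_unshiftArcs hN, add_comm 1] at this
    exact (mem_arcsWithin.1 this).1
  · exact (mem_canStructs.1 (mem_filter.1 hV).1).innerArcs_nestArcs rfl
  · obtain ⟨hM, h1n⟩ := mem_closedStructs.1 (mem_filter.1 hM).1
    exact hM.nestArcs_innerArcs h1n le_rfl rfl
  · rw [(mem_canStructs.1 (mem_filter.1 hV).1).card_nestArcs rfl, pow_add]

theorem closedPoly_add_two_mul_eq (hr : 1 ≤ r) {m : ℕ} (hm : lam ≤ m + 1) :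
    closedPoly lam r (m + 2 * r) = Polynomial.X * closedPoly lam r (m + 2 * r - 2) +
      Polynomial.X ^ r * (structPoly lam r m - closedPoly lam r m) := by
  classical
  have hlong := sum_closedStructs_filter_mem_eq (lam := lam) hr (m + 2 * r - 2)
  rw [show m + 2 * r - 2 + 2 = m + 2 * r by omega, show m + 2 * r - r = m + r by omega]
    at hlong
  have hsplit : structPoly lam r m - closedPoly lam r m =
      ∑ V ∈ (canStructs lam r m).filter ((1, m) ∉ ·), Polynomial.X ^ #V := by
    rw [structPoly, closedPoly, closedStructs,
      ← sum_filter_add_sum_filter_not (canStructs lam r m) ((1, m) ∈ ·), add_sub_cancel_left]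
  rw [hsplit, closedPoly, ← sum_filter_add_sum_filter_not _ ((r + 1, m + r) ∈ ·), hlong,
    sum_closedStructs_filter_not_mem_eq hr hm]

end Counting

section GeneratingFunctions

open PowerSeries

variable {lam r : ℕ}

noncomputable def closedGf (lam r : ℕ) : PowerSeries (Polynomial ℚ) :=
  PowerSeries.mk (closedPoly lam r)

theorem coeff_mul_closedGf_of_lt (hr : 1 ≤ r) (F : PowerSeries (Polynomial ℚ)) {n : ℕ}
    (hn : n + 1 < 2 * r + lam) : coeff n (F * closedGf lam r) = 0 := by
  rw [coeff_mul]
  refine sum_eq_zero fun p hp => ?_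
  rw [closedGf, coeff_mk, closedPoly_of_lt hr (by have := mem_antidiagonal.1 hp; omega),
    mul_zero]

theorem Sgf_eq_one_add_X_mul_add_mul_closedGf (hr : 1 ≤ r) :
    Sgf lam r = 1 + X * Sgf lam r + Sgf lam r * closedGf lam r := by
  refine PowerSeries.ext fun n => ?_
  rcases n with _ | n
  · rw [map_add, map_add, coeff_zero_X_mul, coeff_mul_closedGf_of_lt hr _ (by omega), coeff_Sgf,
      structPoly_of_le (Nat.zero_le _)]
    simp
  · rw [map_add, map_add, coeff_succ_X_mul, coeff_one, if_neg n.succ_ne_zero, zero_add,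
      coeff_mul, Nat.sum_antidiagonal_eq_sum_range_succ
        (fun i j => coeff i (Sgf lam r) * coeff j (closedGf lam r)), sum_range_succ, Nat.sub_self]
    simp only [closedGf, coeff_mk, coeff_Sgf]
    rw [closedPoly_of_lt hr (by omega), mul_zero, add_zero, structPoly_succ]

theorem coeff_xxy_pow_mul (k m : ℕ) (F : PowerSeries (Polynomial ℚ)) :
    coeff (m + 2 * k) (xxy ^ k * F) = Polynomial.X ^ k * coeff m F := by
  rw [xxy, mul_pow, ← pow_mul, ← map_pow, mul_comm 2, mul_assoc, coeff_X_pow_mul',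
    if_pos (by omega), Nat.add_sub_cancel, coeff_C_mul]

theorem coeff_xxy_pow_mul_of_lt {k n : ℕ} (F : PowerSeries (Polynomial ℚ)) (h : n < 2 * k) :
    coeff n (xxy ^ k * F) = 0 := by
  rw [xxy, mul_pow, ← pow_mul, mul_assoc, coeff_X_pow_mul', if_neg (by omega)]

/-- Below `n = 2r + λ - 1` there are no closed structures; at `n = 2r + m` with `m < λ - 1` the
term `(x²y)^r S` counts the empty interiors, which are too short, and `Σ x^i` removes them. -/
theorem closedGf_mul_Agf (hlam : 1 ≤ lam) (hr : 1 ≤ r) :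
    closedGf lam r * Agf r = xxy ^ r * (Sgf lam r - ∑ i ∈ range (lam - 1), X ^ i) := by
  refine PowerSeries.ext fun n => ?_
  by_cases hn : n + 1 < 2 * r + lam
  · rw [mul_comm, coeff_mul_closedGf_of_lt hr _ hn]
    rcases lt_or_ge n (2 * r) with h2r | h2r
    · rw [coeff_xxy_pow_mul_of_lt _ h2r]
    · obtain ⟨m, rfl⟩ : ∃ m, n = m + 2 * r := ⟨n - 2 * r, by omega⟩
      rw [coeff_xxy_pow_mul, map_sub, coeff_Sgf, structPoly_of_le (by omega),
        coeff_sum_range_X_pow, if_pos (by omega), sub_self, mul_zero]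
  · obtain ⟨m, rfl⟩ : ∃ m, n = m + 2 * r := ⟨n - 2 * r, by omega⟩
    have h2 : m + 2 * r = (m + 2 * r - 2) + 2 * 1 := by omega
    rw [Agf, mul_add, mul_sub, mul_one, map_add, map_sub, mul_comm _ xxy, mul_comm _ (xxy ^ r),
      coeff_xxy_pow_mul, coeff_xxy_pow_mul, map_sub, coeff_Sgf, coeff_sum_range_X_pow,
      if_neg (by omega), sub_zero]
    nth_rw 2 [h2]
    rw [← pow_one xxy, coeff_xxy_pow_mul]
    simp only [closedGf, coeff_mk, pow_one]
    rw [closedPoly_add_two_mul_eq hr (by omega)]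
    ring

theorem Bgf_mul_Sgf (hlam : 1 ≤ lam) (hr : 1 ≤ r) :
    Bgf lam r * Sgf lam r = Agf r + xxy ^ r * Sgf lam r ^ 2 := by
  rw [Bgf]
  linear_combination Agf r * Sgf_eq_one_add_X_mul_add_mul_closedGf (lam := lam) hr +
    Sgf lam r * closedGf_mul_Agf hlam hr

theorem constantCoeff_xxy_pow (hr : 1 ≤ r) : constantCoeff (xxy ^ r) = 0 := by
  simp [xxy, zero_pow (by omega : r ≠ 0)]

theorem isUnit_Bgf (hr : 1 ≤ r) : IsUnit (Bgf lam r) := by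
  simp [isUnit_iff_constantCoeff, Bgf, Agf, xxy, zero_pow (show r ≠ 0 by omega)]

theorem CatAt_eq_one_add_z0_mul_sq (hr : 1 ≤ r) :
    CatAt lam r = 1 + z0 lam r * CatAt lam r ^ 2 := by
  have hz : constantCoeff (z0 lam r) = 0 := by simp [z0, constantCoeff_xxy_pow hr]
  have hsubst : CatAt lam r =
      (catalanSeries.map (Nat.castRingHom (Polynomial ℚ))).subst (z0 lam r) :=
    PowerSeries.ext fun n => by simp [coeff_subst_eq_sum_range hz, CatAt]
  rw [hsubst]
  exact catalanSeries_subst hz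

end GeneratingFunctions

/-- `S(x,y) = (A(x,y)/B(x,y)) · C((x²y)^r · A(x,y)/B(x,y)²)` where `C` is the generating
function of the Catalan numbers. -/
theorem Sgf_catalan_form (lam r : ℕ) (hlam : 1 ≤ lam) (hr : 1 ≤ r) :
    Sgf lam r = Agf r * Ring.inverse (Bgf lam r) * CatAt lam r := by
  have hinv : Bgf lam r * Ring.inverse (Bgf lam r) = 1 :=
    Ring.mul_inverse_cancel _ (isUnit_Bgf hr)
  have hC := CatAt_eq_one_add_z0_mul_sq (lam := lam) hr
  rw [z0] at hC
  refine PowerSeries.eq_of_mul_eq_add_mul_sq (isUnit_Bgf hr) (constantCoeff_xxy_pow hr)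
    (Bgf_mul_Sgf hlam hr) ?_
  linear_combination (Agf r * CatAt lam r) * hinv + Agf r * hC
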